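/- Let f : ℝⁿ → ℝ be L_f-Lipschitz smooth and g : ℝⁿ → ℝ ∪ {+∞} be proper, lsc and convex, and set φ = f + g, ψ_γ = φ ∘ prox_{γg}. Then ψ_γ is locally Lipschitz with pointwise Lipschitz modulus satisfying lip ψ_γ(x) ≤ ‖∇f(prox_{γg}(x))‖ + (1/γ)‖x - prox_{γg}(x)‖ for every x. -/

import Mathlib

/-!
The optimality condition of the prox together with the convexity of `g` says that `(x - P x)/γ`
is a subgradient of `g` at `P x`. Adding two such subgradient inequalities shows that `P` is
nonexpansive, and a single one gives `g (P y) - g (P z) ≤ γ⁻¹ ‖y - P y‖ ‖y - z‖`. With the mean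
value inequality for `f`, this yields `ψ y - ψ z ≤ C y z * ‖y - z‖` for a continuous `C` with
`C x x = ‖∇f (P x)‖ + γ⁻¹ ‖x - P x‖`, from which both claims follow.
-/

open scoped RealInnerProductSpace
open Filter

noncomputable section

abbrev E (n : ℕ) := EuclideanSpace ℝ (Fin n)

/-- `g` is proper, lower semicontinuous and convex (extended-real-valued). -/
def ProperConvexLsc {n : ℕ} (g : E n → EReal) : Prop :=
  (∃ x, g x ≠ ⊤) ∧ (∀ x, g x ≠ ⊥) ∧ LowerSemicontinuous g ∧
    ∀ x y : E n, ∀ a b : ℝ, 0 ≤ a → 0 ≤ b → a + b = 1 →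
      g (a • x + b • y) ≤ (a : ℝ) * g x + (b : ℝ) * g y

/-- `P` is the proximal operator of `g` with stepsize `γ`. -/
def IsProx {n : ℕ} (g : E n → EReal) (γ : ℝ) (P : E n → E n) : Prop :=
  ∀ z u, g (P z) + (((1 / (2 * γ)) * ‖P z - z‖ ^ 2 : ℝ) : EReal)
        ≤ g u + (((1 / (2 * γ)) * ‖u - z‖ ^ 2 : ℝ) : EReal)

/-- Pointwise Lipschitz modulus: `lip h(x) = limsup_{y,z → x, y ≠ z} |h y - h z|/‖y - z‖`. -/
def lipMod {n : ℕ} (h : E n → ℝ) (x : E n) : ENNReal :=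
  Filter.limsup (fun p : E n × E n => ENNReal.ofReal (|h p.1 - h p.2| / ‖p.1 - p.2‖))
    ((nhds (x, x)) ⊓ Filter.principal {p : E n × E n | p.1 ≠ p.2})

/-- `f` is `L`-Lipschitz smooth with gradient `f'`. -/
def LipSmooth {n : ℕ} (f : E n → ℝ) (f' : E n → E n) (L : ℝ) : Prop :=
  (∀ x, HasGradientAt f (f' x) x) ∧ LipschitzWith L.toNNReal f'

open scoped NNReal Topology

section Subgradient

variable {F : Type*} [NormedAddCommGroup F] [InnerProductSpace ℝ F]

theorem ConvexOn.add_inner_le_of_isMinOn_add_sq {s : Set F} {G : F → ℝ} {γ : ℝ} {p z y : F}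
    (hG : ConvexOn ℝ s G) (hp : p ∈ s)
    (hmin : IsMinOn (fun u => G u + 1 / (2 * γ) * ‖u - z‖ ^ 2) s p) (hy : y ∈ s) :
    G p + 1 / γ * ⟪z - p, y - p⟫ ≤ G y := by
  have hle_add : ∀ t : ℝ, 0 < t → t ≤ 1 →
      G p + 1 / γ * ⟪z - p, y - p⟫ ≤ G y + t * (1 / (2 * γ) * ‖y - p‖ ^ 2) := by
    intro t ht ht1
    have hconv := hG.2 hy hp ht.le (sub_nonneg.2 ht1) (add_sub_cancel t 1)
    have hopt := isMinOn_iff.1 hmin _ (hG.1 hy hp ht.le (sub_nonneg.2 ht1) (add_sub_cancel t 1))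
    have hu : t • y + (1 - t) • p - z = (p - z) + t • (y - p) := by module
    have hzp : z - p = -(p - z) := by module
    simp only [hu, smul_eq_mul] at hopt hconv
    rw [norm_add_sq_real, inner_smul_right, norm_smul, Real.norm_eq_abs, mul_pow, sq_abs] at hopt
    rw [hzp, inner_neg_left]
    refine le_of_mul_le_mul_left ?_ ht
    linear_combination hopt + hconv
  have hlim : Tendsto (fun t : ℝ => G y + t * (1 / (2 * γ) * ‖y - p‖ ^ 2)) (𝓝[>] 0) (𝓝 (G y)) := by
    simpa using (((tendsto_id (x := 𝓝 (0 : ℝ))).mul_const (1 / (2 * γ) * ‖y - p‖ ^ 2)).const_add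
      (G y)).mono_left nhdsWithin_le_nhds
  refine ge_of_tendsto hlim ?_
  filter_upwards [Ioc_mem_nhdsGT one_pos] with t ht using hle_add t ht.1 ht.2

variable {G : F → ℝ} {P : F → F} {γ : ℝ}

theorem lipschitzWith_one_of_add_inner_le (hγ : 0 < γ)
    (hsub : ∀ x y, G (P x) + 1 / γ * ⟪x - P x, P y - P x⟫ ≤ G (P y)) : LipschitzWith 1 P := by
  refine LipschitzWith.of_dist_le_mul fun y z => ?_
  rw [NNReal.coe_one, one_mul, dist_eq_norm, dist_eq_norm]
  have hsum : ⟪y - P y, P z - P y⟫ + ⟪z - P z, P y - P z⟫ ≤ 0 := by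
    have h := add_le_add (hsub y z) (hsub z y)
    have : 1 / γ * (⟪y - P y, P z - P y⟫ + ⟪z - P z, P y - P z⟫) ≤ 0 := by linarith
    exact nonpos_of_mul_nonpos_right this (by positivity)
  have hfirm : ‖P y - P z‖ ^ 2 ≤ ⟪P y - P z, y - z⟫ := by
    have e : ⟪y - P y, P z - P y⟫ + ⟪z - P z, P y - P z⟫ =
        ‖P y - P z‖ ^ 2 - ⟪P y - P z, y - z⟫ := by
      rw [← real_inner_self_eq_norm_sq]
      simp only [inner_sub_left, inner_sub_right, real_inner_comm]
      ring
    linarith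
  nlinarith [real_inner_le_norm (P y - P z) (y - z), norm_nonneg (P y - P z), norm_nonneg (y - z)]

theorem sub_le_of_add_inner_le (hγ : 0 < γ)
    (hsub : ∀ x y, G (P x) + 1 / γ * ⟪x - P x, P y - P x⟫ ≤ G (P y)) (y z : F) :
    G (P y) - G (P z) ≤ 1 / γ * ‖y - P y‖ * ‖y - z‖ := by
  have hP := (lipschitzWith_one_of_add_inner_le hγ hsub).norm_sub_le y z
  rw [NNReal.coe_one, one_mul] at hP
  have hinner : -⟪y - P y, P z - P y⟫ ≤ ‖y - P y‖ * ‖y - z‖ := by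
    rw [← inner_neg_right, neg_sub]
    exact (real_inner_le_norm _ _).trans (by gcongr)
  calc G (P y) - G (P z) ≤ 1 / γ * -⟪y - P y, P z - P y⟫ := by linarith [hsub y z]
    _ ≤ 1 / γ * (‖y - P y‖ * ‖y - z‖) := by gcongr
    _ = 1 / γ * ‖y - P y‖ * ‖y - z‖ := by ring

end Subgradient

section Bound

variable {F : Type*} [NormedAddCommGroup F] [InnerProductSpace ℝ F] [CompleteSpace F]

theorem norm_sub_le_of_hasGradientAt_of_lipschitzWith {f : F → ℝ} {f' : F → F} {K : ℝ≥0}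
    (hf : ∀ x, HasGradientAt f (f' x) x) (hf' : LipschitzWith K f') (a b : F) :
    ‖f b - f a‖ ≤ (‖f' a‖ + K * ‖b - a‖) * ‖b - a‖ := by
  refine (convex_closedBall a ‖b - a‖).norm_image_sub_le_of_norm_hasFDerivWithin_le
    (fun w _ => (hf w).hasFDerivAt.hasFDerivWithinAt) (fun w hw => ?_)
    (Metric.mem_closedBall_self (norm_nonneg _)) (by simp [dist_eq_norm])
  rw [LinearIsometryEquiv.norm_map]
  rw [Metric.mem_closedBall, dist_eq_norm] at hw
  calc ‖f' w‖ ≤ ‖f' a‖ + ‖f' w - f' a‖ := norm_le_norm_add_norm_sub' _ _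
    _ ≤ ‖f' a‖ + K * ‖w - a‖ := by gcongr; exact hf'.norm_sub_le w a
    _ ≤ ‖f' a‖ + K * ‖b - a‖ := by gcongr

theorem sub_le_of_hasGradientAt_of_add_inner_le {f : F → ℝ} {f' : F → F} {K : ℝ≥0} {G : F → ℝ}
    {P : F → F} {γ : ℝ} (hf : ∀ x, HasGradientAt f (f' x) x) (hf' : LipschitzWith K f')
    (hγ : 0 < γ) (hsub : ∀ x y, G (P x) + 1 / γ * ⟪x - P x, P y - P x⟫ ≤ G (P y)) (y z : F) :
    (f (P y) + G (P y)) - (f (P z) + G (P z)) ≤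
      (‖f' (P z)‖ + K * ‖y - z‖ + 1 / γ * ‖y - P y‖) * ‖y - z‖ := by
  have hP := (lipschitzWith_one_of_add_inner_le hγ hsub).norm_sub_le y z
  rw [NNReal.coe_one, one_mul] at hP
  have hfP : f (P y) - f (P z) ≤ (‖f' (P z)‖ + K * ‖y - z‖) * ‖y - z‖ :=
    calc f (P y) - f (P z) ≤ ‖f (P y) - f (P z)‖ := Real.le_norm_self _
      _ ≤ (‖f' (P z)‖ + K * ‖P y - P z‖) * ‖P y - P z‖ :=
        norm_sub_le_of_hasGradientAt_of_lipschitzWith hf hf' _ _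
      _ ≤ (‖f' (P z)‖ + K * ‖y - z‖) * ‖y - z‖ := by gcongr
  linarith [sub_le_of_add_inner_le hγ hsub y z]

end Bound

section LocalLipschitz

variable {F : Type*} [SeminormedAddCommGroup F] {h : F → ℝ} {C : F → F → ℝ}

theorem eventually_abs_sub_le_mul_of_sub_le (hh : ∀ y z, h y - h z ≤ C y z * ‖y - z‖) {x : F}
    (hC : ContinuousAt (Function.uncurry C) (x, x)) {r : ℝ} (hr : C x x < r) :
    ∀ᶠ p in 𝓝 (x, x), |h p.1 - h p.2| ≤ r * ‖p.1 - p.2‖ := by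
  have hlt : ∀ᶠ p in 𝓝 (x, x), C p.1 p.2 < r := hC.eventually (gt_mem_nhds hr)
  have hlt_swap : ∀ᶠ p in 𝓝 (x, x), C p.2 p.1 < r := (continuous_swap.tendsto (x, x)).eventually hlt
  filter_upwards [hlt, hlt_swap] with p hp hp_swap
  rw [abs_sub_le_iff]
  constructor
  · calc h p.1 - h p.2 ≤ C p.1 p.2 * ‖p.1 - p.2‖ := hh _ _
      _ ≤ r * ‖p.1 - p.2‖ := by gcongr
  · calc h p.2 - h p.1 ≤ C p.2 p.1 * ‖p.2 - p.1‖ := hh _ _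
      _ ≤ r * ‖p.1 - p.2‖ := by rw [norm_sub_rev]; gcongr

theorem locallyLipschitz_of_sub_le_mul (hh : ∀ y z, h y - h z ≤ C y z * ‖y - z‖)
    (hC : Continuous (Function.uncurry C)) : LocallyLipschitz h := by
  intro x
  have hev := eventually_abs_sub_le_mul_of_sub_le hh hC.continuousAt (lt_add_one (C x x))
  rw [nhds_prod_eq] at hev
  obtain ⟨U, hU, hUU⟩ :=
    eventually_prod_self_iff (r := fun a b => |h a - h b| ≤ (C x x + 1) * ‖a - b‖) |>.1 hev
  refine ⟨(C x x + 1).toNNReal, U, hU, LipschitzOnWith.of_dist_le_mul fun a ha b hb => ?_⟩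
  rw [Real.dist_eq, dist_eq_norm]
  exact (hUU a ha b hb).trans (by gcongr; exact Real.le_coe_toNNReal _)

end LocalLipschitz

theorem lipMod_le_of_sub_le_mul {n : ℕ} {h : E n → ℝ} {C : E n → E n → ℝ}
    (hh : ∀ y z, h y - h z ≤ C y z * ‖y - z‖) {x : E n}
    (hC : ContinuousAt (Function.uncurry C) (x, x)) : lipMod h x ≤ ENNReal.ofReal (C x x) := by
  refine ENNReal.le_of_forall_pos_le_add fun ε hε _ => ?_
  rw [← ENNReal.ofReal_coe_nnreal]
  refine le_trans ?_ ENNReal.ofReal_add_le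
  have hev := eventually_abs_sub_le_mul_of_sub_le hh hC (lt_add_of_pos_right (C x x) hε)
  refine limsup_le_of_le (by isBoundedDefault) ?_
  filter_upwards [mem_inf_of_left hev, mem_inf_of_right (mem_principal_self _)] with p hp hne
  have hpos : 0 < ‖p.1 - p.2‖ := norm_pos_iff.2 (sub_ne_zero_of_ne hne)
  exact ENNReal.ofReal_le_ofReal ((div_le_iff₀ hpos).2 hp)

section Prox

variable {n : ℕ} {g : E n → EReal} {γ : ℝ} {P : E n → E n}

theorem IsProx.apply_ne_top (hP : IsProx g γ P) (hg : ∃ x, g x ≠ ⊤) (z : E n) : g (P z) ≠ ⊤ := by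
  obtain ⟨x, hx⟩ := hg
  intro htop
  have h := hP z x
  rw [htop, EReal.top_add_of_ne_bot (EReal.coe_ne_bot _), top_le_iff] at h
  exact EReal.add_ne_top hx (EReal.coe_ne_top _) h

theorem ProperConvexLsc.convexOn_toReal (hg : ProperConvexLsc g) :
    ConvexOn ℝ {x | g x ≠ ⊤} fun x => (g x).toReal := by
  obtain ⟨-, hbot, -, hconv⟩ := hg
  have hle : ∀ a, g a ≠ ⊤ → ∀ b, g b ≠ ⊤ → ∀ s t : ℝ, 0 ≤ s → 0 ≤ t → s + t = 1 →
      g (s • a + t • b) ≤ ((s * (g a).toReal + t * (g b).toReal : ℝ) : EReal) := by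
    intro a ha b hb s t hs ht hst
    rw [EReal.coe_add, EReal.coe_mul, EReal.coe_mul, EReal.coe_toReal ha (hbot a),
      EReal.coe_toReal hb (hbot b)]
    exact hconv a b s t hs ht hst
  constructor
  · intro a ha b hb s t hs ht hst
    exact ne_top_of_le_ne_top (EReal.coe_ne_top _) (hle a ha b hb s t hs ht hst)
  · intro a ha b hb s t hs ht hst
    simp only [smul_eq_mul]
    exact (EReal.toReal_le_toReal (hle a ha b hb s t hs ht hst) (hbot _)
      (EReal.coe_ne_top _)).trans_eq (EReal.toReal_coe _)

theorem IsProx.isMinOn_toReal (hP : IsProx g γ P) (hbot : ∀ x, g x ≠ ⊥) {z : E n}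
    (hz : g (P z) ≠ ⊤) :
    IsMinOn (fun u => (g u).toReal + 1 / (2 * γ) * ‖u - z‖ ^ 2) {x | g x ≠ ⊤} (P z) := by
  refine isMinOn_iff.2 fun u hu => ?_
  have h := hP z u
  rw [← EReal.coe_toReal hz (hbot _), ← EReal.coe_toReal hu (hbot u), ← EReal.coe_add,
    ← EReal.coe_add] at h
  exact EReal.coe_le_coe_iff.1 h

theorem IsProx.add_inner_le (hP : IsProx g γ P) (hg : ProperConvexLsc g) (x y : E n) :
    (g (P x)).toReal + 1 / γ * ⟪x - P x, P y - P x⟫ ≤ (g (P y)).toReal :=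
  hg.convexOn_toReal.add_inner_le_of_isMinOn_add_sq (hP.apply_ne_top hg.1 x)
    (hP.isMinOn_toReal hg.2.1 (hP.apply_ne_top hg.1 x)) (hP.apply_ne_top hg.1 y)

end Prox

theorem psi_locally_lipschitz_general {n : ℕ} (f : E n → ℝ) (f' : E n → E n) (L : ℝ)
    (hf : LipSmooth f f' L) (g : E n → EReal) (γ : ℝ) (hγ : 0 < γ)
    (hg : ProperConvexLsc g) (P : E n → E n) (hP : IsProx g γ P) :
    LocallyLipschitz (fun x => f (P x) + (g (P x)).toReal) ∧
      ∀ x, lipMod (fun y => f (P y) + (g (P y)).toReal) x ≤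
        ENNReal.ofReal (‖f' (P x)‖ + (1 / γ) * ‖x - P x‖) := by
  obtain ⟨hgrad, hf'⟩ := hf
  have hsub := hP.add_inner_le hg
  have hbound :=
    sub_le_of_hasGradientAt_of_add_inner_le (G := fun u => (g u).toReal) hgrad hf' hγ hsub
  have hPc := (lipschitzWith_one_of_add_inner_le (G := fun u => (g u).toReal) hγ hsub).continuous
  have hC : Continuous (Function.uncurry fun y z : E n =>
      ‖f' (P z)‖ + L.toNNReal * ‖y - z‖ + 1 / γ * ‖y - P y‖) := by
    have := hf'.continuous
    fun_prop
  refine ⟨locallyLipschitz_of_sub_le_mul hbound hC, fun x => ?_⟩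
  simpa using lipMod_le_of_sub_le_mul hbound hC.continuousAt

/-- `ψ_γ = (f + g) ∘ prox_{γg}` is locally Lipschitz with
`lip ψ_γ(x) ≤ ‖∇f(prox_{γg}(x))‖ + (1/γ)‖x - prox_{γg}(x)‖`. -/
theorem psi_locally_lipschitz {n : ℕ} (f : E n → ℝ) (f' : E n → E n) (L : ℝ) (hL : 0 ≤ L)
    (hf : LipSmooth f f' L) (g : E n → EReal) (γ : ℝ) (hγ : 0 < γ)
    (hg : ProperConvexLsc g) (P : E n → E n) (hP : IsProx g γ P) :
    LocallyLipschitz (fun x => f (P x) + (g (P x)).toReal) ∧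
      ∀ x, lipMod (fun y => f (P y) + (g (P y)).toReal) x ≤
        ENNReal.ofReal (‖f' (P x)‖ + (1 / γ) * ‖x - P x‖) :=
  psi_locally_lipschitz_general f f' L hf g γ hγ hg P hP
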